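/- For integers m, n > 1, the sparing number of the (m,n)-friendship graph K_1 + mP_n is m·⌊(n+1)/2⌋, where P_n denotes the path of length n (with n edges). -/

import Mathlib

open Pointwise

/-- The induced set-label on (potential) edges: the sumset of the end-vertex labels. -/
def edgeLabel {V : Type*} (f : V → Finset ℕ) : Sym2 V → Finset ℕ :=
  Sym2.lift ⟨fun u v => f u + f v, fun u v => add_comm (f u) (f v)⟩

/-- An integer additive set-indexer (IASI) of a simple graph `G`: an injective assignment
of nonempty finite sets of non-negative integers to the vertices such that the induced
sumset-labeling of the edges is also injective. -/
structure IsIASI {V : Type*} (G : SimpleGraph V) (f : V → Finset ℕ) : Prop where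
  nonempty : ∀ v, (f v).Nonempty
  inj : Function.Injective f
  edgeInj : Set.InjOn (edgeLabel f) G.edgeSet

/-- A weak IASI: an IASI for which every edge label has cardinality equal to the maximum of
the cardinalities of the labels of its end vertices. -/
structure IsWeakIASI {V : Type*} (G : SimpleGraph V) (f : V → Finset ℕ) extends
    IsIASI G f : Prop where
  weak : ∀ ⦃u v⦄, G.Adj u v → (f u + f v).card = max (f u).card (f v).card

/-- The number of mono-indexed edges of `G` under the labeling `f`, i.e. the number of
edges whose set-label is a singleton. -/
noncomputable def monoEdgeCount {V : Type*} (G : SimpleGraph V) (f : V → Finset ℕ) : ℕ :=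
  {e ∈ G.edgeSet | (edgeLabel f e).card = 1}.ncard

/-- The sparing number of `G`: the minimum number of mono-indexed edges taken over all
weak IASIs of `G`. -/
noncomputable def sparingNumber {V : Type*} (G : SimpleGraph V) : ℕ :=
  sInf {k | ∃ f : V → Finset ℕ, IsWeakIASI G f ∧ monoEdgeCount G f = k}

/-- The join `G + H` of two graphs on disjoint vertex sets: all vertices and edges of
`G` and `H`, together with every edge joining a vertex of `G` to a vertex of `H`. -/
def graphJoin {V W : Type*} (G : SimpleGraph V) (H : SimpleGraph W) :
    SimpleGraph (V ⊕ W) where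
  Adj x y :=
    match x, y with
    | Sum.inl a, Sum.inl b => G.Adj a b
    | Sum.inr a, Sum.inr b => H.Adj a b
    | Sum.inl _, Sum.inr _ => True
    | Sum.inr _, Sum.inl _ => True
  symm := by
    constructor
    rintro (a | a) (b | b) h
    · exact h.symm
    · trivial
    · trivial
    · exact h.symm
  loopless := by
    constructor
    rintro (a | a) h
    · exact G.irrefl h
    · exact H.irrefl h

/-- The disjoint union `mG` of `m` copies of the graph `G`. -/
def graphCopies {V : Type*} (m : ℕ) (G : SimpleGraph V) : SimpleGraph (Fin m × V) where
  Adj x y := x.1 = y.1 ∧ G.Adj x.2 y.2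
  symm := by
    constructor
    rintro ⟨i, u⟩ ⟨j, v⟩ ⟨h1, h2⟩
    exact ⟨h1.symm, h2.symm⟩
  loopless := by
    constructor
    rintro ⟨i, u⟩ ⟨-, h⟩
    exact G.irrefl h

/-!
By Cauchy–Davenport, `#(A + B) ≥ #A + #B - 1`, so in a weak IASI two adjacent vertices cannot
both carry labels with two or more elements: the vertices with non-singleton labels form an
independent set `S`, and an edge is mono-indexed exactly when it avoids `S`. Conversely every
independent set `S` arises this way: for an injective code `c`, label `v` by `{2 ^ c v}`, or by
`{2 ^ c v, 2 ^ c v + 1}` when `v ∈ S`; the least element `2 ^ c u + 2 ^ c v` of an edge label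
recovers the edge from its binary expansion. So the sparing number is the least number of edges
avoiding an independent set.

In `K_1 + mP_n`, if the apex lies in `S` then all `mn` path edges avoid `S`. Otherwise `S` meets
each path in at most `⌊(n + 2) / 2⌋` vertices, and each of the remaining (at least
`m⌊(n + 1) / 2⌋`) path vertices gives an apex edge avoiding `S`. Taking for `S` the even-indexed
path vertices attains this bound.
-/

open scoped Finset

theorem IsLeast.add {α : Type*} [Add α] [Preorder α] [AddLeftMono α] [AddRightMono α]
    {s t : Set α} {a b : α} (hs : IsLeast s a) (ht : IsLeast t b) : IsLeast (s + t) (a + b) :=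
  ⟨Set.add_mem_add hs.1 ht.1, add_mem_lowerBounds_add hs.2 ht.2⟩

theorem Sym2.eq_of_two_pow_add_two_pow_eq {a b a' b' : ℕ} (hab : a ≠ b) (hab' : a' ≠ b')
    (h : 2 ^ a + 2 ^ b = 2 ^ a' + 2 ^ b') : s(a, b) = s(a', b') := by
  have hpair : ({a, b} : Finset ℕ) = {a', b'} := Finset.geomSum_injective le_rfl <| by
    simpa only [Finset.sum_pair hab, Finset.sum_pair hab'] using h
  ext x
  simpa only [Sym2.mem_iff, Finset.mem_insert, Finset.mem_singleton] using Finset.ext_iff.mp hpair x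

namespace SimpleGraph

variable {V : Type*}

def edgesAvoiding (G : SimpleGraph V) (S : Set V) : Set (Sym2 V) :=
  {e ∈ G.edgeSet | ∀ v ∈ e, v ∉ S}

end SimpleGraph

open SimpleGraph

namespace IsWeakIASI

variable {V : Type*} {G : SimpleGraph V} {f : V → Finset ℕ}

theorem card_eq_one_or_card_eq_one (hf : IsWeakIASI G f) {u v : V} (h : G.Adj u v) :
    #(f u) = 1 ∨ #(f v) = 1 := by
  have hu := (hf.nonempty u).card_pos
  have hv := (hf.nonempty v).card_pos
  have := cauchy_davenport_add_of_linearOrder_isCancelAdd (hf.nonempty u) (hf.nonempty v)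
  rw [hf.weak h] at this
  omega

theorem isIndepSet_card_ne_one (hf : IsWeakIASI G f) : G.IsIndepSet {v | #(f v) ≠ 1} :=
  fun _ hu _ hv _ h => (hf.card_eq_one_or_card_eq_one h).elim hu hv

theorem card_edgeLabel_eq_one_iff (hf : IsWeakIASI G f) {u v : V} (h : G.Adj u v) :
    #(edgeLabel f s(u, v)) = 1 ↔ #(f u) = 1 ∧ #(f v) = 1 := by
  have hu := (hf.nonempty u).card_pos
  have hv := (hf.nonempty v).card_pos
  change #(f u + f v) = 1 ↔ _
  rw [hf.weak h]
  omega

theorem monoEdgeCount_eq (hf : IsWeakIASI G f) :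
    monoEdgeCount G f = (G.edgesAvoiding {v | #(f v) ≠ 1}).ncard := by
  rw [monoEdgeCount]
  congr 1
  ext e
  induction e using Sym2.ind with | _ u v => ?_
  simp only [edgesAvoiding, Set.mem_ofPred_eq, Sym2.mem_iff, forall_eq_or_imp, forall_eq,
    not_not, and_congr_right_iff]
  exact hf.card_edgeLabel_eq_one_iff

end IsWeakIASI

section DoublingLabel

variable {V : Type*} (c : V → ℕ) (S : Set V) [DecidablePred (· ∈ S)]

def doublingLabel (v : V) : Finset ℕ :=
  if v ∈ S then {2 ^ c v, 2 ^ c v + 1} else {2 ^ c v}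

variable {c S}

theorem doublingLabel_nonempty (v : V) : (doublingLabel c S v).Nonempty := by
  unfold doublingLabel; split_ifs <;> simp

theorem isLeast_doublingLabel (v : V) : IsLeast ↑(doublingLabel c S v) (2 ^ c v) := by
  unfold doublingLabel; split_ifs <;> simp [IsLeast, lowerBounds]

theorem card_doublingLabel_eq_one_iff {v : V} : #(doublingLabel c S v) = 1 ↔ v ∉ S := by
  unfold doublingLabel; split_ifs with h <;> simp [h]

theorem isWeakIASI_doublingLabel {G : SimpleGraph V} (hc : Function.Injective c)
    (hS : G.IsIndepSet S) : IsWeakIASI G (doublingLabel c S) where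
  nonempty := doublingLabel_nonempty
  inj u v h := hc <| Nat.pow_right_injective le_rfl <|
    (isLeast_doublingLabel u).unique (h ▸ isLeast_doublingLabel v)
  edgeInj e he e' he' h := by
    induction e using Sym2.ind with | _ u v => ?_
    induction e' using Sym2.ind with | _ u' v' => ?_
    have hleast (x y : V) :
        IsLeast ↑(edgeLabel (doublingLabel c S) s(x, y)) (2 ^ c x + 2 ^ c y) := by
      rw [edgeLabel, Sym2.lift_mk, Finset.coe_add]
      exact (isLeast_doublingLabel x).add (isLeast_doublingLabel y)
    apply Sym2.map.injective hc
    rw [Sym2.map_mk, Sym2.map_mk]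
    exact Sym2.eq_of_two_pow_add_two_pow_eq (hc.ne (G.ne_of_adj he)) (hc.ne (G.ne_of_adj he'))
      ((hleast u v).unique (h ▸ hleast u' v'))
  weak u v h := by
    have hu := (doublingLabel_nonempty (c := c) (S := S) u).card_pos
    have hv := (doublingLabel_nonempty (c := c) (S := S) v).card_pos
    rcases not_and_or.mp (fun huv : u ∈ S ∧ v ∈ S => hS huv.1 huv.2 (G.ne_of_adj h) h)
      with hu' | hv'
    · obtain ⟨a, ha⟩ := Finset.card_eq_one.mp (card_doublingLabel_eq_one_iff.mpr hu')
      rw [ha, Finset.card_singleton_add, Finset.card_singleton]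
      omega
    · obtain ⟨a, ha⟩ := Finset.card_eq_one.mp (card_doublingLabel_eq_one_iff.mpr hv')
      rw [ha, Finset.card_add_singleton, Finset.card_singleton]
      omega

end DoublingLabel

theorem sparingNumber_eq_sInf_ncard_edgesAvoiding {V : Type*} [Countable V] (G : SimpleGraph V) :
    sparingNumber G = sInf {k | ∃ S, G.IsIndepSet S ∧ (G.edgesAvoiding S).ncard = k} := by
  rw [sparingNumber]
  congr 1
  ext k
  constructor
  · rintro ⟨f, hf, rfl⟩
    exact ⟨_, hf.isIndepSet_card_ne_one, hf.monoEdgeCount_eq.symm⟩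
  · rintro ⟨S, hS, rfl⟩
    classical
    obtain ⟨c, hc⟩ := exists_injective_nat V
    have hf := isWeakIASI_doublingLabel (S := S) hc hS
    refine ⟨_, hf, ?_⟩
    simp only [hf.monoEdgeCount_eq, ne_eq, card_doublingLabel_eq_one_iff, not_not,
      Set.ofPred_mem_eq]

section Join

variable {V W : Type*} {G : SimpleGraph V} {H : SimpleGraph W}

@[simp] theorem graphJoin_adj_inl_inr (a : V) (b : W) : (graphJoin G H).Adj (.inl a) (.inr b) :=
  trivial

variable [Finite V] [Finite W] {S : Set (V ⊕ W)} {a : V}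

theorem ncard_compl_preimage_inr_le_ncard_edgesAvoiding (ha : .inl a ∉ S) :
    (Sum.inr ⁻¹' S)ᶜ.ncard ≤ ((graphJoin G H).edgesAvoiding S).ncard :=
  Set.ncard_le_ncard_of_injOn (fun w => s(.inl a, .inr w))
    (fun w hw => ⟨graphJoin_adj_inl_inr (G := G) (H := H) a w,
      by simpa [Sym2.mem_iff, or_imp] using ⟨ha, hw⟩⟩)
    (fun w _ w' _ h => by simpa using h) (Set.toFinite _)

theorem ncard_edgeSet_le_ncard_edgesAvoiding (hS : (graphJoin G H).IsIndepSet S)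
    (ha : .inl a ∈ S) :
    H.edgeSet.ncard ≤ ((graphJoin G H).edgesAvoiding S).ncard := by
  refine Set.ncard_le_ncard_of_injOn (Sym2.map Sum.inr) (fun e he => ⟨?_, ?_⟩)
    (Sym2.map.injective Sum.inr_injective).injOn (Set.toFinite _)
  · induction e using Sym2.ind with | _ u v => exact he
  · rintro _ hv hvS
    obtain ⟨w, -, rfl⟩ := Sym2.mem_map.mp hv
    exact hS ha hvS Sum.inl_ne_inr (graphJoin_adj_inl_inr a w)

end Join

@[simp] theorem graphCopies_adj {V : Type*} {m : ℕ} {H : SimpleGraph V} {x y : Fin m × V} :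
    (graphCopies m H).Adj x y ↔ x.1 = y.1 ∧ H.Adj x.2 y.2 := Iff.rfl

theorem graphCopies_isIndepSet_ncard_le {V : Type*} [Finite V] {H : SimpleGraph V} {m k : ℕ}
    (hH : ∀ t, H.IsIndepSet t → t.ncard ≤ k) {s : Set (Fin m × V)}
    (hs : (graphCopies m H).IsIndepSet s) : s.ncard ≤ m * k := by
  have hcover : s = ⋃ i, Prod.mk i '' {v | (i, v) ∈ s} := by
    ext ⟨i, v⟩; simp
  calc s.ncard = (⋃ i, Prod.mk i '' {v | (i, v) ∈ s}).ncard := congrArg _ hcover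
    _ ≤ ∑ i : Fin m, (Prod.mk i '' {v | (i, v) ∈ s}).ncard := Set.ncard_iUnion_le_of_fintype _
    _ = ∑ i : Fin m, {v | (i, v) ∈ s}.ncard := by
        simp only [Set.ncard_image_of_injective _ (Prod.mk_right_injective _)]
    _ ≤ ∑ _ : Fin m, k := Finset.sum_le_sum fun i _ =>
        hH _ fun u hu v hv huv h => hs hu hv (by simp [huv]) ⟨rfl, h⟩
    _ = m * k := by simp

theorem pathGraph_isIndepSet_ncard_le {N : ℕ} {s : Set (Fin N)}
    (hs : (pathGraph N).IsIndepSet s) : s.ncard ≤ (N + 1) / 2 := by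
  calc s.ncard ≤ (Set.univ : Set (Fin ((N + 1) / 2))).ncard :=
        Set.ncard_le_ncard_of_injOn (fun j => ⟨j / 2, by omega⟩) (fun _ _ => Set.mem_univ _)
          (fun i hi j hj hij => by_contra fun hne => hs hi hj hne <| by
            simp only [Fin.mk.injEq] at hij
            rw [pathGraph_adj]
            have : i.val ≠ j.val := Fin.val_injective.ne hne
            omega)
    _ = (N + 1) / 2 := by simp

theorem mul_le_ncard_edgeSet_graphCopies_pathGraph (m n : ℕ) :
    m * n ≤ (graphCopies m (pathGraph (n + 1))).edgeSet.ncard := by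
  calc m * n = (Set.univ : Set (Fin m × Fin n)).ncard := by simp
    _ ≤ _ := Set.ncard_le_ncard_of_injOn (fun q => s((q.1, q.2.castSucc), (q.1, q.2.succ)))
          (fun q _ => by simp [pathGraph_adj]) (fun q _ q' _ h => by
            simp only [Sym2.eq_iff, Prod.mk.injEq, Fin.ext_iff, Fin.val_castSucc,
              Fin.val_succ] at h
            ext <;> omega) (Set.toFinite _)

abbrev friendshipGraph (m n : ℕ) : SimpleGraph (Fin 1 ⊕ Fin m × Fin (n + 1)) :=
  graphJoin ⊥ (graphCopies m (pathGraph (n + 1)))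

section Friendship

variable {m n : ℕ}

theorem mul_half_le_ncard_edgesAvoiding_friendshipGraph {S : Set (Fin 1 ⊕ Fin m × Fin (n + 1))}
    (hS : (friendshipGraph m n).IsIndepSet S) :
    m * ((n + 1) / 2) ≤ ((friendshipGraph m n).edgesAvoiding S).ncard := by
  by_cases hapex : .inl 0 ∈ S
  · calc m * ((n + 1) / 2) ≤ m * n := Nat.mul_le_mul_left m (by omega)
      _ ≤ _ := mul_le_ncard_edgeSet_graphCopies_pathGraph m n
      _ ≤ _ := ncard_edgeSet_le_ncard_edgesAvoiding hS hapex
  · have hpath : (Sum.inr ⁻¹' S).ncard ≤ m * ((n + 2) / 2) :=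
      graphCopies_isIndepSet_ncard_le (fun _ => pathGraph_isIndepSet_ncard_le)
        fun x hx y hy hxy => hS hx hy (Sum.inr_injective.ne hxy)
    have htotal : (Sum.inr ⁻¹' S).ncard + (Sum.inr ⁻¹' S)ᶜ.ncard = m * (n + 1) := by
      rw [Set.ncard_add_ncard_compl]; simp
    have hsplit : m * (n + 1) = m * ((n + 1) / 2) + m * ((n + 2) / 2) := by
      rw [← mul_add]; congr 1; omega
    have hspokes :
        (Sum.inr ⁻¹' S)ᶜ.ncard ≤ ((friendshipGraph m n).edgesAvoiding S).ncard :=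
      ncard_compl_preimage_inr_le_ncard_edgesAvoiding hapex
    omega

theorem isIndepSet_evenPathVertices :
    (friendshipGraph m n).IsIndepSet (Sum.inr '' {p | Even p.2.val}) := by
  rintro _ ⟨p, hp, rfl⟩ _ ⟨q, hq, rfl⟩ - ⟨-, hpq⟩
  rw [pathGraph_adj] at hpq
  simp only [Set.mem_ofPred_eq, Nat.even_iff] at hp hq
  omega

theorem ncard_edgesAvoiding_evenPathVertices_le :
    ((friendshipGraph m n).edgesAvoiding (Sum.inr '' {p | Even p.2.val})).ncard ≤
      m * ((n + 1) / 2) := by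
  set apexEdge : Fin m × Fin ((n + 1) / 2) → Sym2 (Fin 1 ⊕ Fin m × Fin (n + 1)) :=
    fun q => s(.inl 0, .inr (q.1, ⟨2 * q.2 + 1, by omega⟩))
  have hodd (a : Fin 1) (q : Fin m × Fin (n + 1)) (hq : ¬Even q.2.val) :
      s(.inl a, .inr q) ∈ apexEdge '' Set.univ := by
    rw [Nat.not_even_iff] at hq
    refine ⟨(q.1, ⟨q.2 / 2, by omega⟩), Set.mem_univ _, ?_⟩
    rw [Subsingleton.elim a 0]
    simp only [apexEdge]
    congr 2
    exact Prod.ext rfl (Fin.ext (by simp only; omega))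
  have hsub : (friendshipGraph m n).edgesAvoiding (Sum.inr '' {p | Even p.2.val}) ⊆
      apexEdge '' Set.univ := by
    rintro e ⟨he, havoid⟩
    induction e using Sym2.ind with | _ x y => ?_
    simp only [Sym2.mem_iff, forall_eq_or_imp, forall_eq] at havoid
    rcases x with a | p <;> rcases y with b | q
    · exact he.elim
    · exact hodd a q (by simpa using havoid.2)
    · exact Sym2.eq_swap ▸ hodd b p (by simpa using havoid.1)
    · simp only [Sum.inr_injective.mem_set_image, Set.mem_ofPred_eq, Nat.not_even_iff] at havoid
      have hpq := pathGraph_adj.mp he.2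
      omega
  calc _ ≤ (apexEdge '' Set.univ).ncard := Set.ncard_le_ncard hsub (Set.toFinite _)
    _ ≤ (Set.univ : Set (Fin m × Fin ((n + 1) / 2))).ncard := Set.ncard_image_le (Set.toFinite _)
    _ = m * ((n + 1) / 2) := by simp

end Friendship

theorem friendship_path_sparingNumber_general (m n : ℕ) :
    sparingNumber
      (graphJoin (⊥ : SimpleGraph (Fin 1))
        (graphCopies m (SimpleGraph.pathGraph (n + 1)))) = m * ((n + 1) / 2) := by
  rw [sparingNumber_eq_sInf_ncard_edgesAvoiding]
  have hS₀ := isIndepSet_evenPathVertices (m := m) (n := n)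
  refine le_antisymm ?_ (le_csInf ⟨_, _, hS₀, rfl⟩ ?_)
  · exact le_trans (Nat.sInf_le ⟨_, hS₀, rfl⟩) ncard_edgesAvoiding_evenPathVertices_le
  · rintro k ⟨S, hS, rfl⟩
    exact mul_half_le_ncard_edgesAvoiding_friendshipGraph hS

/-- For integers `m, n > 1`, the sparing number of the `(m,n)`-friendship graph
`K_1 + mP_n` is `m·⌊(n+1)/2⌋`, where `P_n` is the path of length `n`
(with `n` edges and `n+1` vertices), i.e. `SimpleGraph.pathGraph (n+1)`. -/
theorem friendship_path_sparingNumber (m n : ℕ) (hm : 1 < m) (hn : 1 < n) :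
    sparingNumber
      (graphJoin (⊥ : SimpleGraph (Fin 1))
        (graphCopies m (SimpleGraph.pathGraph (n + 1)))) = m * ((n + 1) / 2) :=
  friendship_path_sparingNumber_general m n
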